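/- arXiv:2310.19521 — 6 statements merged into one kernel-verified Lean document; each statement's English description precedes it below -/
import Mathlib

section
/- The Gauss-Lobatto differentiation matrix satisfies the summation-by-parts property: ω_k D_{kl} + ω_l D_{lk} = δ_{kp}δ_{lp} − δ_{k0}δ_{l0} for all 0 ≤ k, l ≤ p. -/
open Polynomial

/-- Summation-by-parts property of the Gauss–Lobatto differentiation matrix:
`ω_k D_{kl} + ω_l D_{lk} = δ_{kp} δ_{lp} - δ_{k0} δ_{l0}`. -/
theorem dgsem_summation_by_parts (p : ℕ) (hp : 1 ≤ p)
    (ξ : Fin (p + 1) → ℝ) (hξ : StrictMono ξ)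
    (h0 : ξ 0 = -1) (hlast : ξ (Fin.last p) = 1)
    (ω : Fin (p + 1) → ℝ) (hω : ∀ k, 0 < ω k)
    (hquad : ∀ f : ℝ[X], f.natDegree ≤ 2 * p - 1 →
      ∑ k, ω k * f.eval (ξ k) = ∫ x in (-1 : ℝ)..1, f.eval x)
    (D : Matrix (Fin (p + 1)) (Fin (p + 1)) ℝ)
    (hD : ∀ k l, D k l = (derivative (Lagrange.basis Finset.univ ξ l)).eval (ξ k)) :
    ∀ k l : Fin (p + 1),
      ω k * D k l + ω l * D l k =
        (if k = Fin.last p then (1 : ℝ) else 0) * (if l = Fin.last p then (1 : ℝ) else 0)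
          - (if k = 0 then (1 : ℝ) else 0) * (if l = 0 then (1 : ℝ) else 0) := by
  intro k l
  have hinj : Set.InjOn ξ (Finset.univ : Finset (Fin (p + 1))) :=
    fun a _ b _ h => hξ.injective h
  set B := fun i => Lagrange.basis (Finset.univ : Finset (Fin (p + 1))) ξ i with hB
  have hevB : ∀ i m : Fin (p + 1), (B i).eval (ξ m) = if m = i then 1 else 0 := by
    intro i m
    by_cases h : m = i
    · subst h; rw [if_pos rfl, hB, Lagrange.eval_basis_self hinj (Finset.mem_univ m)]
    · rw [if_neg h, hB, Lagrange.eval_basis_of_ne (Ne.symm h) (Finset.mem_univ m)]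
  set F := B k * B l with hF
  have hdegB : ∀ i, (B i).natDegree = p := by
    intro i
    rw [hB, Lagrange.natDegree_basis hinj (Finset.mem_univ i)]
    simp
  have hdeg : (derivative F).natDegree ≤ 2 * p - 1 := by
    have h1 : F.natDegree ≤ 2 * p := by
      calc F.natDegree ≤ (B k).natDegree + (B l).natDegree := natDegree_mul_le
        _ = 2 * p := by rw [hdegB, hdegB]; ring
    calc (derivative F).natDegree ≤ F.natDegree - 1 := natDegree_derivative_le F
      _ ≤ 2 * p - 1 := by omega
  have hq := hquad (derivative F) hdeg
  have hint : (∫ x in (-1 : ℝ)..1, (derivative F).eval x) = F.eval 1 - F.eval (-1) :=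
    intervalIntegral.integral_eq_sub_of_hasDerivAt (f := fun x => F.eval x)
      (f' := fun x => (derivative F).eval x)
      (fun x _ => F.hasDerivAt x) ((Polynomial.continuous _).intervalIntegrable _ _)
  have hsum : (∑ m, ω m * (derivative F).eval (ξ m)) = ω k * D k l + ω l * D l k := by
    have hterm : ∀ m : Fin (p + 1), ω m * (derivative F).eval (ξ m) =
        (if m = l then ω m * (derivative (B k)).eval (ξ m) else 0) +
        (if m = k then ω m * (derivative (B l)).eval (ξ m) else 0) := by
      intro m
      rw [hF, derivative_mul, eval_add, eval_mul, eval_mul, hevB, hevB]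
      split_ifs <;> ring
    rw [Finset.sum_congr rfl fun m _ => hterm m, Finset.sum_add_distrib]
    simp [Finset.sum_ite_eq', hD, hB]
    ring
  have swap : ∀ a b : Fin (p + 1), (if a = b then (1 : ℝ) else 0) = if b = a then 1 else 0 := by
    intro a b
    by_cases h : a = b
    · subst h; simp
    · rw [if_neg h, if_neg fun h' => h h'.symm]
  have e1 : F.eval 1 = (if k = Fin.last p then (1 : ℝ) else 0) *
      (if l = Fin.last p then (1 : ℝ) else 0) := by
    conv_lhs => rw [← hlast]
    rw [hF, eval_mul, hevB, hevB, swap (Fin.last p) k, swap (Fin.last p) l]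
  have e0 : F.eval (-1) = (if k = 0 then (1 : ℝ) else 0) * (if l = 0 then (1 : ℝ) else 0) := by
    conv_lhs => rw [← h0]
    rw [hF, eval_mul, hevB, hevB, swap 0 k, swap 0 l]
  rw [← hsum, hq, hint, e1, e0]
end

section
/- Let D be the Gauss-Lobatto differentiation matrix, ω_p the last quadrature weight, and e_p the last canonical basis vector. For any λ > 0, the matrix L = I − 2λ (D^T − (1/ω_p) e_p e_p^T) is invertible. -/
/-!
Since `D` differentiates polynomials of degree `≤ p` through their nodal values, `(Dˡ)ₖₗ = ℓₗ⁽ˡ⁾(ξₖ)`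
and `D` is nilpotent. Writing `N = 2λDᵀ`, the matrix is `L = (I - N) + (2λ/ωₚ) eₚeₚᵀ`, so by the
matrix determinant lemma `det L = det (I - N) · (1 + (2λ/ωₚ) 𝒟ₚₚ)` with
`𝒟 = (I - N)⁻¹ = Σ Nˡ`. Finally `𝒟ₚₚ = Σ (2λ)ˡ ℓₚ⁽ˡ⁾(ξₚ) ≥ 0`: `ℓₚ` is a product of factors
`(X - ξⱼ)/(ξₚ - ξⱼ)` with `ξⱼ < ξₚ`, each having nonnegative derivatives at `ξₚ`, and the Leibniz
rule preserves this.
-/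

open Polynomial Finset

theorem Polynomial.eval_iterate_derivative_mul_nonneg {R : Type*} [CommSemiring R] [PartialOrder R]
    [IsOrderedRing R] {P Q : R[X]} {t : R} (hP : ∀ m, 0 ≤ (derivative^[m] P).eval t)
    (hQ : ∀ m, 0 ≤ (derivative^[m] Q).eval t) (m : ℕ) :
    0 ≤ (derivative^[m] (P * Q)).eval t := by
  rw [iterate_derivative_mul, eval_finsetSum]
  exact sum_nonneg fun k _ => by
    rw [eval_smul, eval_mul]
    exact nsmul_nonneg (mul_nonneg (hP _) (hQ _)) _

namespace Lagrange

section DifferentiationMatrix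

variable {F ι : Type*} [Field F] [Fintype ι] [DecidableEq ι] {ξ : ι → F}

theorem natDegree_iterate_derivative_basis_lt (hξ : Function.Injective ξ) (m : ℕ) (l : ι) :
    (derivative^[m] (Lagrange.basis univ ξ l)).natDegree < Fintype.card ι := by
  have hcard : 0 < Fintype.card ι := Fintype.card_pos_iff.mpr ⟨l⟩
  calc _ ≤ (Lagrange.basis univ ξ l).natDegree - m := natDegree_iterate_derivative _ m
    _ ≤ Fintype.card ι - 1 := by rw [natDegree_basis hξ.injOn (mem_univ l), card_univ]; omega
    _ < Fintype.card ι := by omega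

variable {D : Matrix ι ι F}

theorem eval_derivative_eq_sum_mul_eval (hξ : Function.Injective ξ)
    (hD : ∀ k l, D k l = (derivative (Lagrange.basis univ ξ l)).eval (ξ k))
    {P : F[X]} (hP : P.degree < Fintype.card ι) (k : ι) :
    (derivative P).eval (ξ k) = ∑ j, D k j * P.eval (ξ j) := by
  rw [← card_univ] at hP
  conv_lhs => rw [eq_interpolate hξ.injOn hP, interpolate_apply]
  simp only [map_sum, derivative_C_mul, eval_finsetSum, eval_mul, eval_C, hD]
  exact sum_congr rfl fun j _ => mul_comm _ _

theorem pow_apply_eq_eval_iterate_derivative_basis (hξ : Function.Injective ξ)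
    (hD : ∀ k l, D k l = (derivative (Lagrange.basis univ ξ l)).eval (ξ k)) (m : ℕ) (k l : ι) :
    (D ^ m) k l = (derivative^[m] (Lagrange.basis univ ξ l)).eval (ξ k) := by
  induction m generalizing k with
  | zero =>
    by_cases hkl : k = l
    · subst hkl
      simp [eval_basis_self hξ.injOn (mem_univ k)]
    · simp [hkl, eval_basis_of_ne (Ne.symm hkl) (mem_univ k)]
  | succ m ih =>
    have hdeg : (derivative^[m] (Lagrange.basis univ ξ l)).degree < Fintype.card ι :=
      degree_le_natDegree.trans_lt (WithBot.coe_lt_coe.mpr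
        (natDegree_iterate_derivative_basis_lt hξ m l))
    rw [pow_succ', Matrix.mul_apply, Function.iterate_succ_apply',
      eval_derivative_eq_sum_mul_eval hξ hD hdeg]
    simp only [ih]

theorem pow_card_eq_zero_of_eval_derivative_basis (hξ : Function.Injective ξ)
    (hD : ∀ k l, D k l = (derivative (Lagrange.basis univ ξ l)).eval (ξ k)) :
    D ^ Fintype.card ι = 0 := by
  ext k l
  have hdeg := natDegree_iterate_derivative_basis_lt hξ 0 l
  rw [Function.iterate_zero_apply] at hdeg
  rw [pow_apply_eq_eval_iterate_derivative_basis hξ hD, iterate_derivative_eq_zero hdeg,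
    eval_zero]
  rfl

end DifferentiationMatrix

section OrderedField

variable {F ι : Type*} [Field F] [LinearOrder F] [IsStrictOrderedRing F]

theorem eval_iterate_derivative_basisDivisor_nonneg {x y t : F} (hyx : y ≤ x) (hyt : y ≤ t)
    (m : ℕ) : 0 ≤ (derivative^[m] (basisDivisor x y)).eval t := by
  have hc : 0 ≤ (x - y)⁻¹ := inv_nonneg.mpr (sub_nonneg.mpr hyx)
  rcases m with _ | _ | m
  · simpa [basisDivisor] using mul_nonneg hc (sub_nonneg.mpr hyt)
  · simpa [basisDivisor] using hc
  · simp [basisDivisor, Function.iterate_succ_apply]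

theorem eval_iterate_derivative_basis_nonneg [DecidableEq ι] {s : Finset ι} {ξ : ι → F} {i : ι}
    (hi : ∀ j ∈ s, ξ j ≤ ξ i) (m : ℕ) :
    0 ≤ (derivative^[m] (Lagrange.basis s ξ i)).eval (ξ i) := by
  refine prod_induction _ (fun P : F[X] => ∀ m, 0 ≤ (derivative^[m] P).eval (ξ i))
    (fun P Q => eval_iterate_derivative_mul_nonneg) (fun m => ?_)
    (fun j hj => eval_iterate_derivative_basisDivisor_nonneg
      (hi j (mem_of_mem_erase hj)) (hi j (mem_of_mem_erase hj))) m
  rcases m with _ | m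
  · simp
  · simp [Function.iterate_succ_apply]

end OrderedField

end Lagrange

namespace Matrix

variable {n R : Type*} [Fintype n] [DecidableEq n] [CommRing R]

theorem det_add_single_self {A : Matrix n n R} (hA : IsUnit A.det) (i : n) (c : R) :
    (A + single i i c).det = A.det * (1 + c * A⁻¹ i i) := by
  have hsingle : single i i c
      = replicateCol Unit (Pi.single i c) * replicateRow Unit (Pi.single i (1 : R)) := by
    ext k l
    simp only [single_apply, mul_apply, replicateCol_apply, replicateRow_apply, Pi.single_apply]
    aesop
  rw [hsingle, det_add_replicateCol_mul_replicateRow hA]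
  simp [mul_apply, Pi.single_apply, mul_comm]

theorem inv_one_sub_of_pow_eq_zero {N : Matrix n n R} {k : ℕ} (hN : N ^ k = 0) :
    (1 - N)⁻¹ = ∑ l ∈ range k, N ^ l :=
  inv_eq_right_inv (by rw [mul_neg_geom_sum, hN, sub_zero])

end Matrix

theorem dgsem_1d_diag_block_invertible_general (p : ℕ)
    (ξ : Fin (p + 1) → ℝ) (hξ : StrictMono ξ)
    (ω : Fin (p + 1) → ℝ) (hω : ∀ k, 0 < ω k)
    (D : Matrix (Fin (p + 1)) (Fin (p + 1)) ℝ)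
    (hD : ∀ k l, D k l = (derivative (Lagrange.basis Finset.univ ξ l)).eval (ξ k))
    (lam : ℝ) (hlam : 0 < lam) :
    IsUnit ((1 : Matrix (Fin (p + 1)) (Fin (p + 1)) ℝ)
      - (2 * lam) • (D.transpose
          - Matrix.single (Fin.last p) (Fin.last p) (ω (Fin.last p))⁻¹)).det := by
  set e := Fin.last p
  set N := (2 * lam) • D.transpose
  have hN_pow (l : ℕ) : N ^ l = (2 * lam) ^ l • (D ^ l).transpose := by
    rw [_root_.smul_pow, Matrix.transpose_pow]
  have hD_nil : D ^ (p + 1) = 0 := by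
    simpa using Lagrange.pow_card_eq_zero_of_eval_derivative_basis hξ.injective hD
  have hN_nil : N ^ (p + 1) = 0 := by rw [hN_pow, hD_nil, Matrix.transpose_zero, smul_zero]
  have hunit : IsUnit (1 - N).det :=
    (Matrix.isUnit_iff_isUnit_det _).mp (IsNilpotent.isUnit_one_sub ⟨_, hN_nil⟩)
  have hinv_nonneg : 0 ≤ (1 - N)⁻¹ e e := by
    rw [Matrix.inv_one_sub_of_pow_eq_zero hN_nil, Matrix.sum_apply]
    refine sum_nonneg fun l _ => ?_
    rw [hN_pow, Matrix.smul_apply, Matrix.transpose_apply, smul_eq_mul,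
      Lagrange.pow_apply_eq_eval_iterate_derivative_basis hξ.injective hD]
    exact mul_nonneg (by positivity) (Lagrange.eval_iterate_derivative_basis_nonneg
      (fun j _ => hξ.monotone (Fin.le_last j)) l)
  have hL : 1 - (2 * lam) • (D.transpose - Matrix.single e e (ω e)⁻¹)
      = 1 - N + Matrix.single e e (2 * lam * (ω e)⁻¹) := by
    rw [smul_sub, Matrix.smul_single, smul_eq_mul]
    abel
  rw [hL, Matrix.det_add_single_self hunit]
  have hωe := hω e
  exact hunit.mul (IsUnit.mk0 _ (add_pos_of_pos_of_nonneg one_pos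
    (mul_nonneg (by positivity) hinv_nonneg)).ne')

/-- The diagonal block `L = I - 2λ (Dᵀ - (1/ω_p) e_p e_pᵀ)` of the 1D time-implicit
DGSEM scheme is invertible for every `λ > 0`. -/
theorem dgsem_1d_diag_block_invertible (p : ℕ)
    (ξ : Fin (p + 1) → ℝ) (hξ : StrictMono ξ)
    (h0 : ξ 0 = -1) (hlast : ξ (Fin.last p) = 1)
    (ω : Fin (p + 1) → ℝ) (hω : ∀ k, 0 < ω k)
    (D : Matrix (Fin (p + 1)) (Fin (p + 1)) ℝ)
    (hD : ∀ k l, D k l = (derivative (Lagrange.basis Finset.univ ξ l)).eval (ξ k))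
    (lam : ℝ) (hlam : 0 < lam) :
    IsUnit ((1 : Matrix (Fin (p + 1)) (Fin (p + 1)) ℝ)
      - (2 * lam) • (D.transpose
          - Matrix.single (Fin.last p) (Fin.last p) (ω (Fin.last p))⁻¹)).det :=
  dgsem_1d_diag_block_invertible_general p ξ hξ ω hω D hD lam hlam
end

section
/- For the p=1 DGSEM with Gauss-Lobatto nodes ξ_0 = −1, ξ_1 = 1 and weights ω_0 = ω_1 = 1, the backward-Euler cell-averaged update is maximum principle preserving for every λ > 0: i.e., the coefficients 𝒟_{pk} − 𝒟_{p0} ≥ 0, 𝒟_{p0} ≥ 0, ω_p + 2λ(𝒟_{pp} − 𝒟_{pk}) ≥ 0, and σ^p = ω_p + 2λ(𝒟_{pp} − 𝒟_{p0}) > 0 all hold unconditionally, where 𝒟 = (I − 2λD^T)^{-1}. -/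
set_option linter.unnecessarySeqFocus false


/-- For `p = 1` (Gauss–Lobatto nodes `-1, 1`, weights `ω_0 = ω_1 = 1`), the backward-Euler
DGSEM cell-averaged update is maximum principle preserving for every `λ > 0`: with
`𝒟 = (I - 2λ Dᵀ)⁻¹`, the sign conditions `𝒟_{pk} - 𝒟_{p0} ≥ 0`, `𝒟_{p0} ≥ 0`,
`ω_p + 2λ(𝒟_{pp} - 𝒟_{pk}) ≥ 0` and `σ^p = ω_p + 2λ(𝒟_{pp} - 𝒟_{p0}) > 0` hold
unconditionally. -/
theorem dgsem_p1_unconditionally_MPP (lam : ℝ) (hlam : 0 < lam) :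
    let D : Matrix (Fin 2) (Fin 2) ℝ := !![-1/2, 1/2; -1/2, 1/2]
    let Dc : Matrix (Fin 2) (Fin 2) ℝ :=
      ((1 : Matrix (Fin 2) (Fin 2) ℝ) - (2 * lam) • D.transpose)⁻¹
    (∀ k : Fin 2, 0 ≤ Dc 1 k - Dc 1 0) ∧
      0 ≤ Dc 1 0 ∧
      (∀ k : Fin 2, 0 ≤ 1 + 2 * lam * (Dc 1 1 - Dc 1 k)) ∧
      0 < 1 + 2 * lam * (Dc 1 1 - Dc 1 0) := by
  intro D Dc
  have hM : (1 : Matrix (Fin 2) (Fin 2) ℝ) - (2 * lam) • D.transpose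
      = !![1 + lam, lam; -lam, 1 - lam] := by
    show _ = _
    ext i j
    fin_cases i <;> fin_cases j <;>
      simp [D, Matrix.one_apply, Matrix.transpose_apply, Matrix.cons_transpose, Matrix.head_transpose, Matrix.vecHead, Matrix.vecTail] <;> ring
  have hinv : Dc = !![1 - lam, -lam; lam, 1 + lam] := by
    show (_)⁻¹ = _
    rw [hM]
    apply Matrix.inv_eq_right_inv
    ext i j
    fin_cases i <;> fin_cases j <;>
      simp [Matrix.mul_apply, Fin.sum_univ_two, Matrix.one_apply] <;> ring
  rw [hinv]
  refine ⟨?_, ?_, ?_, ?_⟩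
  · intro k; fin_cases k <;> simp
  · simp; nlinarith
  · intro k; fin_cases k <;> simp <;> nlinarith
  · simp
    nlinarith
end

section
/- Let 𝒟^(λ)_{kl} denote the entries of (I − 2λD^T)^{-1} for the Gauss-Lobatto differentiation matrix D. Then as λ → ∞, 𝒟^(λ)_{pp} − 𝒟^(λ)_{pk} ∼ (2λ)^{p−1} (1 − ξ_k) p! / ∏_{l=0}^{p−1}(1 − ξ_l), which is positive for k < p; consequently, for each p ≥ 1 there exists a finite λ_min ≥ 0 such that 𝒟^(λ)_{pp} − 𝒟^(λ)_{pk} ≥ 0 for all 0 ≤ k ≤ p whenever λ > λ_min. -/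
open Polynomial Filter

/-- As `λ → ∞`, `𝒟^(λ)_{pp} - 𝒟^(λ)_{pk}` is asymptotically equivalent to
`(2λ)^{p-1} (1-ξ_k) p! / ∏_{l<p} (1-ξ_l)` (positive for `k < p`); consequently there is a
finite `λ_min ≥ 0` such that `𝒟^(λ)_{pp} - 𝒟^(λ)_{pk} ≥ 0` for all `k` whenever
`λ > λ_min`. Here `𝒟^(λ) = (I - 2λ Dᵀ)⁻¹`. -/
theorem dgsem_Dcal_asymptotics_and_lambda_min (p : ℕ) (hp : 1 ≤ p)
    (ξ : Fin (p + 1) → ℝ) (hξ : StrictMono ξ)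
    (h0 : ξ 0 = -1) (hlast : ξ (Fin.last p) = 1)
    (ω : Fin (p + 1) → ℝ) (hω : ∀ k, 0 < ω k)
    (hquad : ∀ f : ℝ[X], f.natDegree ≤ 2 * p - 1 →
      ∑ k, ω k * f.eval (ξ k) = ∫ x in (-1 : ℝ)..1, f.eval x)
    (D : Matrix (Fin (p + 1)) (Fin (p + 1)) ℝ)
    (hD : ∀ k l, D k l = (derivative (Lagrange.basis Finset.univ ξ l)).eval (ξ k))
    (Dcal : ℝ → Matrix (Fin (p + 1)) (Fin (p + 1)) ℝ)
    (hDcal : ∀ lam, Dcal lam =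
      ((1 : Matrix (Fin (p + 1)) (Fin (p + 1)) ℝ) - (2 * lam) • D.transpose)⁻¹) :
    (∀ k : Fin (p + 1), k ≠ Fin.last p →
      Tendsto (fun lam : ℝ =>
          (Dcal lam (Fin.last p) (Fin.last p) - Dcal lam (Fin.last p) k) /
            ((2 * lam) ^ (p - 1) * (1 - ξ k) * (p.factorial : ℝ) /
              ∏ l ∈ Finset.univ.erase (Fin.last p), (1 - ξ l)))
        atTop (nhds 1)) ∧
      ∃ lamMin : ℝ, 0 ≤ lamMin ∧ ∀ lam : ℝ, lamMin < lam → ∀ k : Fin (p + 1),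
        0 ≤ Dcal lam (Fin.last p) (Fin.last p) - Dcal lam (Fin.last p) k := by
  classical
  set P : Fin (p + 1) := Fin.last p with hP
  have hinj : Set.InjOn ξ ↑(Finset.univ : Finset (Fin (p + 1))) :=
    fun a _ b _ h => hξ.injective h
  set L : Fin (p + 1) → ℝ[X] := fun j => Lagrange.basis Finset.univ ξ j with hL
  have hcard : (Finset.univ : Finset (Fin (p + 1))).card = p + 1 := by simp
  have hLdeg : ∀ j, (L j).natDegree = p := by
    intro j
    rw [hL, Lagrange.natDegree_basis hinj (Finset.mem_univ j), hcard]; omega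
  -- the differentiation property of D
  have interp : ∀ (g : ℝ[X]), g.natDegree ≤ p → ∀ k,
      ∑ l, D k l * g.eval (ξ l) = (derivative g).eval (ξ k) := by
    intro g hg k
    have hdeg : g.degree < ((Finset.univ : Finset (Fin (p + 1))).card : ℕ) := by
      rw [hcard]
      exact lt_of_le_of_lt degree_le_natDegree (by exact_mod_cast Nat.lt_succ_of_le hg)
    have hgi := Lagrange.eq_interpolate hinj hdeg
    calc ∑ l, D k l * g.eval (ξ l)
        = ∑ l, g.eval (ξ l) * (derivative (L l)).eval (ξ k) := by
          refine Finset.sum_congr rfl fun l _ => ?_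
          rw [hD k l]; ring
      _ = (derivative g).eval (ξ k) := by
          conv_rhs => rw [hgi]
          rw [Lagrange.interpolate_apply, derivative_sum, eval_finset_sum]
          refine Finset.sum_congr rfl fun l _ => ?_
          rw [derivative_C_mul, eval_mul, eval_C]
  -- powers of D
  have hpow : ∀ (m : ℕ) (k j : Fin (p + 1)),
      (D ^ m) k j = ((⇑derivative)^[m] (L j)).eval (ξ k) := by
    intro m
    induction m with
    | zero =>
      intro k j
      rw [pow_zero, Function.iterate_zero_apply, Matrix.one_apply]
      by_cases h : k = j
      · subst h
        rw [if_pos rfl, hL, Lagrange.eval_basis_self hinj (Finset.mem_univ k)]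
      · rw [if_neg h, hL,
          Lagrange.eval_basis_of_ne (fun hh => h (hh ▸ rfl) : j ≠ k) (Finset.mem_univ k)]
    | succ m ih =>
      intro k j
      have hdeg : ((⇑derivative)^[m] (L j)).natDegree ≤ p :=
        le_trans (natDegree_iterate_derivative _ m) (by rw [hLdeg]; omega)
      rw [pow_succ', Matrix.mul_apply]
      calc ∑ l, D k l * (D ^ m) l j
          = ∑ l, D k l * ((⇑derivative)^[m] (L j)).eval (ξ l) := by
            refine Finset.sum_congr rfl fun l _ => ?_; rw [ih l j]
        _ = (derivative ((⇑derivative)^[m] (L j))).eval (ξ k) := interp _ hdeg k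
        _ = ((⇑derivative)^[m + 1] (L j)).eval (ξ k) := by
            rw [Function.iterate_succ_apply']
  -- nilpotency
  have hnil : D ^ (p + 1) = 0 := by
    ext k j
    rw [hpow, Function.iterate_succ_apply']
    have h0' : ((⇑derivative)^[p] (L j)).natDegree ≤ 0 := by
      have := natDegree_iterate_derivative (L j) p
      rwa [hLdeg, Nat.sub_self] at this
    rw [eq_C_of_natDegree_le_zero h0', derivative_C, eval_zero, Matrix.zero_apply]
  -- geometric series expansion of Dcal
  have hser : ∀ lam, Dcal lam =
      ∑ i ∈ Finset.range (p + 1), ((2 * lam) • D.transpose) ^ i := by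
    intro lam
    rw [hDcal]
    apply Matrix.inv_eq_right_inv
    rw [mul_neg_geom_sum]
    have : ((2 * lam) • D.transpose) ^ (p + 1) = 0 := by
      rw [_root_.smul_pow, ← Matrix.transpose_pow, hnil, Matrix.transpose_zero, smul_zero]
    rw [this, sub_zero]
  -- entries
  have hentry : ∀ lam (k : Fin (p + 1)), Dcal lam P k =
      ∑ i ∈ Finset.range (p + 1), (2 * lam) ^ i * (D ^ i) k P := by
    intro lam k
    rw [hser]
    rw [Matrix.sum_apply]
    refine Finset.sum_congr rfl fun i _ => ?_
    rw [_root_.smul_pow, Matrix.smul_apply, ← Matrix.transpose_pow, Matrix.transpose_apply,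
      smul_eq_mul]
  -- the constant c = p! * leadingCoeff (L P)
  set c : ℝ := (p.factorial : ℝ) * (L P).leadingCoeff with hc
  have hLP_lead : (L P).leadingCoeff = ∏ j ∈ Finset.univ.erase P, (ξ P - ξ j)⁻¹ := by
    rw [hL]
    show (∏ j ∈ Finset.univ.erase P, Lagrange.basisDivisor (ξ P) (ξ j)).leadingCoeff = _
    rw [leadingCoeff_prod]
    refine Finset.prod_congr rfl fun j hj => ?_
    have hne : ξ P ≠ ξ j := fun h =>
      (Finset.mem_erase.mp hj).1 (hξ.injective h.symm)
    show (C (ξ P - ξ j)⁻¹ * (X - C (ξ j))).leadingCoeff = _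
    rw [leadingCoeff_mul, leadingCoeff_C, leadingCoeff_X_sub_C, mul_one]
  have hprod_pos : 0 < ∏ l ∈ Finset.univ.erase P, (1 - ξ l) := by
    refine Finset.prod_pos fun l hl => ?_
    have hlt : l < P := Fin.lt_last_iff_ne_last.mpr (Finset.mem_erase.mp hl).1
    have := hξ hlt
    rw [hlast] at this
    linarith
  have hc_eq : c = (p.factorial : ℝ) / ∏ l ∈ Finset.univ.erase P, (1 - ξ l) := by
    rw [hc, hLP_lead, div_eq_mul_inv, ← Finset.prod_inv_distrib]
    congr 1
    refine Finset.prod_congr rfl fun j _ => ?_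
    rw [hP, hlast]
  have hc_pos : 0 < c := by
    rw [hc_eq]
    exact div_pos (by exact_mod_cast Nat.factorial_pos p) hprod_pos
  -- the top derivative is the constant c
  have htop : (⇑derivative)^[p] (L P) = C c := by
    have h0' : ((⇑derivative)^[p] (L P)).natDegree ≤ 0 := by
      have := natDegree_iterate_derivative (L P) p
      rwa [hLdeg, Nat.sub_self] at this
    rw [eq_C_of_natDegree_le_zero h0']
    congr 1
    rw [coeff_iterate_derivative, Nat.zero_add, Nat.descFactorial_self, hc,
      nsmul_eq_mul]
    congr 1
    rw [Polynomial.leadingCoeff, hLdeg]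
  -- coefficient b i for each k
  have key : ∀ k : Fin (p + 1), ∃ Q : ℝ[X],
      (∀ lam, Dcal lam P P - Dcal lam P k = Q.eval (2 * lam)) ∧
      Q.natDegree ≤ p - 1 ∧ Q.coeff (p - 1) = (1 - ξ k) * c := by
    intro k
    set b : ℕ → ℝ := fun i => (D ^ i) P P - (D ^ i) k P with hb
    have hbp : b p = 0 := by
      show (D ^ p) P P - (D ^ p) k P = 0
      rw [hpow, hpow, htop, eval_C, eval_C, sub_self]
    have hbp1 : b (p - 1) = (1 - ξ k) * c := by
      set g : ℝ[X] := (⇑derivative)^[p - 1] (L P) with hg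
      have hg1 : g.natDegree ≤ 1 := by
        have h := natDegree_iterate_derivative (L P) (p - 1)
        rw [hLdeg] at h
        rw [hg]
        omega
      have hdg : derivative g = C c := by
        rw [hg, ← Function.iterate_succ_apply' derivative (p - 1) (L P),
          (by omega : (p - 1).succ = p), htop]
      have hg_coeff1 : g.coeff 1 = c := by
        have := coeff_derivative g 0
        rw [hdg, coeff_C, if_pos rfl] at this
        push_cast at this
        linarith
      have heval : ∀ t : ℝ, g.eval t = g.coeff 0 + g.coeff 1 * t := by
        intro t
        rw [eval_eq_sum_range' (lt_of_le_of_lt hg1 one_lt_two) t,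
          show (2 : ℕ) = 1 + 1 from rfl, Finset.sum_range_succ, Finset.sum_range_one]
        ring
      show (D ^ (p - 1)) P P - (D ^ (p - 1)) k P = _
      rw [hpow, hpow, ← hg, heval, heval, hg_coeff1, hP, hlast]
      ring
    refine ⟨∑ i ∈ Finset.range p, C (b i) * X ^ i, ?_, ?_, ?_⟩
    · intro lam
      have hterm : ∀ i ∈ Finset.range (p + 1),
          (2 * lam) ^ i * (D ^ i) P P - (2 * lam) ^ i * (D ^ i) k P =
            b i * (2 * lam) ^ i := by
        intro i _
        show _ = ((D ^ i) P P - (D ^ i) k P) * (2 * lam) ^ i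
        ring
      rw [hentry, hentry, ← Finset.sum_sub_distrib, Finset.sum_congr rfl hterm,
        Finset.sum_range_succ, hbp, zero_mul, add_zero, eval_finset_sum]
      refine Finset.sum_congr rfl fun i _ => ?_
      rw [eval_mul, eval_C, eval_pow, eval_X]
    · refine natDegree_sum_le_of_forall_le _ _ fun i hi => ?_
      refine le_trans (natDegree_C_mul_le _ _) ?_
      rw [natDegree_X_pow]
      exact Nat.le_sub_one_of_lt (Finset.mem_range.mp hi)
    · rw [finset_sum_coeff]
      rw [Finset.sum_eq_single (p - 1)]
      · rw [coeff_C_mul, coeff_X_pow, if_pos rfl, mul_one, hbp1]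
      · intro i _ hne
        rw [coeff_C_mul, coeff_X_pow, if_neg (fun h => hne h.symm), mul_zero]
      · intro h
        exact absurd (Finset.mem_range.mpr (by omega)) h
  have part1 : ∀ k : Fin (p + 1), k ≠ P →
      Tendsto (fun lam : ℝ =>
          (Dcal lam P P - Dcal lam P k) /
            ((2 * lam) ^ (p - 1) * (1 - ξ k) * (p.factorial : ℝ) /
              ∏ l ∈ Finset.univ.erase P, (1 - ξ l)))
        atTop (nhds 1) := by
    intro k hk
    obtain ⟨Q, hQeval, hQdeg, hQcoeff⟩ := key k
    have hk1 : 0 < 1 - ξ k := by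
      have := hξ (Fin.lt_last_iff_ne_last.mpr hk)
      rw [hlast] at this
      linarith
    have hA : (0 : ℝ) < (1 - ξ k) * c := mul_pos hk1 hc_pos
    have hQnd : Q.natDegree = p - 1 :=
      le_antisymm hQdeg (le_natDegree_of_ne_zero (by rw [hQcoeff]; exact hA.ne'))
    have hQlead : Q.leadingCoeff = (1 - ξ k) * c := by
      rw [Polynomial.leadingCoeff, hQnd, hQcoeff]
    have hz : ∀ᶠ x : ℝ in atTop, Q.leadingCoeff * x ^ Q.natDegree ≠ 0 := by
      filter_upwards [eventually_gt_atTop (0 : ℝ)] with x hx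
      exact (mul_pos (hQlead ▸ hA) (pow_pos hx _)).ne'
    have h1 : Tendsto (fun x => eval x Q / (Q.leadingCoeff * x ^ Q.natDegree))
        atTop (nhds 1) :=
      (Asymptotics.isEquivalent_iff_tendsto_one hz).mp Q.isEquivalent_atTop_lead
    have h2 : Tendsto (fun lam : ℝ => 2 * lam) atTop atTop :=
      Tendsto.const_mul_atTop two_pos tendsto_id
    refine (h1.comp h2).congr fun lam => ?_
    show eval (2 * lam) Q / (Q.leadingCoeff * (2 * lam) ^ Q.natDegree) = _
    rw [← hQeval lam, hQnd, hQlead, hc_eq]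
    ring
  refine ⟨part1, ?_⟩
  have hev : ∀ k : Fin (p + 1), ∀ᶠ lam : ℝ in atTop,
      0 ≤ Dcal lam P P - Dcal lam P k := by
    intro k
    by_cases hk : k = P
    · subst hk
      filter_upwards with lam
      simp
    · have T := part1 k hk
      have h12 := T.eventually (eventually_gt_nhds (by norm_num : (1 / 2 : ℝ) < 1))
      filter_upwards [h12, eventually_gt_atTop (0 : ℝ)] with lam hr hlam
      have hk1 : 0 < 1 - ξ k := by
        have := hξ (Fin.lt_last_iff_ne_last.mpr hk)
        rw [hlast] at this
        linarith
      have hden : 0 < (2 * lam) ^ (p - 1) * (1 - ξ k) * (p.factorial : ℝ) /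
          ∏ l ∈ Finset.univ.erase P, (1 - ξ l) :=
        div_pos (mul_pos (mul_pos (pow_pos (by linarith) _) hk1)
          (by exact_mod_cast Nat.factorial_pos p)) hprod_pos
      have hratio : 0 < (Dcal lam P P - Dcal lam P k) /
          ((2 * lam) ^ (p - 1) * (1 - ξ k) * (p.factorial : ℝ) /
            ∏ l ∈ Finset.univ.erase P, (1 - ξ l)) := by linarith
      have := mul_pos hratio hden
      rw [div_mul_cancel₀ _ hden.ne'] at this
      linarith
  obtain ⟨a, ha⟩ := eventually_atTop.mp (eventually_all.mpr hev)
  exact ⟨max a 0, le_max_right _ _, fun lam hlam k =>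
    ha lam (le_of_lt (lt_of_le_of_lt (le_max_left a 0) hlam)) k⟩
end

section
/- Let 𝓛 = D^T − (1/ω_p) e_p e_p^T where D is the Gauss-Lobatto differentiation matrix. Then 0 is not an eigenvalue of 𝓛, and every eigenpair (ψ, r) with r_p = 1 satisfies: ψ is a root of the polynomial ω_p ψ^{p+1} + Σ_{l=0}^{p} ψ^{p−l} D^(l)_{pp} = 0, and r_k = −(1/ω_p) Σ_{l=0}^{p} ψ^{−l−1} D^(l)_{pk} for 0 ≤ k ≤ p−1. -/
/-!
The differentiation matrix is exact on polynomials of degree `≤ p`: it maps nodal values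
of `q` to nodal values of `q'`. Hence `D ^ (p + 1) = 0`, `D 𝟙 = 0`, and `r ᵥ* D = 0` forces
`r = 0` once `r` vanishes at one node (pair `r` with the nodal values of antiderivatives of
the Lagrange basis of the remaining nodes). Summing the components of `𝓛 r = 0` thus gives
`r_p / ω_p = 0`, and then `r = 0`. For `𝓛 r = ψ r` with `r_p = 1` we get `ψ ≠ 0` and
`(ψ - Dᵀ) r = e_p / ω_p`; since `Dᵀ` is nilpotent, the inverse of `ψ - Dᵀ` is the finite
Neumann series `∑ ψ^(-l-1) (Dᵀ)^l`. This is the eigenvector formula, and its last component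
`r_p = 1` is the characteristic equation.
-/

open Polynomial Finset Matrix

theorem Polynomial.exists_derivative_eq {F : Type*} [Field F] [CharZero F] (q : F[X]) :
    ∃ Q : F[X], derivative Q = q ∧ Q.natDegree ≤ q.natDegree + 1 := by
  refine ⟨∑ i ∈ q.support, C (q.coeff i / (i + 1)) * X ^ (i + 1), ?_, ?_⟩
  · rw [derivative_sum]
    conv_rhs => rw [q.as_sum_support]
    refine sum_congr rfl fun i _ => ?_
    rw [derivative_C_mul, derivative_X_pow, ← mul_assoc, ← C_mul, Nat.add_sub_cancel,
      Nat.cast_add, Nat.cast_one, div_mul_cancel₀ _ (Nat.cast_add_one_ne_zero i),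
      C_mul_X_pow_eq_monomial]
  · refine natDegree_sum_le_of_forall_le _ _ fun i hi => (natDegree_C_mul_le _ _).trans ?_
    simpa using le_natDegree_of_mem_supp i hi

namespace Matrix

variable {ι K : Type*} [Fintype ι] [DecidableEq ι]

theorem eq_zero_of_vecMul_eq_single [CommSemiring K] {A : Matrix ι ι K} (hA : A *ᵥ 1 = 0)
    {r : ι → K} {i : ι} {x : K} (h : r ᵥ* A = Pi.single i x) : x = 0 := by
  calc x = Pi.single i x ⬝ᵥ 1 := by simp
    _ = 0 := by rw [← h, ← dotProduct_mulVec, hA, dotProduct_zero]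

theorem eq_neg_sum_of_vecMul_eq_smul_add [Field K] {A : Matrix ι ι K} {m : ℕ} (hA : A ^ m = 0)
    {ψ : K} (hψ : ψ ≠ 0) {r v : ι → K} (h : r ᵥ* A = ψ • r + v) :
    r = -∑ j ∈ range m, (ψ ^ (j + 1))⁻¹ • (v ᵥ* A ^ j) := by
  have key : ∀ n, r = -∑ j ∈ range n, (ψ ^ (j + 1))⁻¹ • (v ᵥ* A ^ j)
      + (ψ ^ n)⁻¹ • (r ᵥ* A ^ n) := by
    intro n
    induction n with
    | zero => simp
    | succ n ih =>
      have hstep : r ᵥ* A ^ (n + 1) = ψ • (r ᵥ* A ^ n) + v ᵥ* A ^ n := by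
        rw [pow_succ', ← vecMul_vecMul, h, add_vecMul, smul_vecMul]
      rw [sum_range_succ, hstep, smul_add, smul_smul, pow_succ, mul_inv, mul_assoc,
        inv_mul_cancel₀ hψ, mul_one]
      exact ih.trans (by abel)
  simpa [hA] using key m

end Matrix

theorem pow_succ_mul_sum_inv_pow_succ_mul {K : Type*} [Field K] {ψ : K} (hψ : ψ ≠ 0) (n : ℕ)
    (d : ℕ → K) :
    ψ ^ (n + 1) * ∑ l ∈ range (n + 1), (ψ ^ (l + 1))⁻¹ * d l
      = ∑ l ∈ range (n + 1), ψ ^ (n - l) * d l := by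
  rw [mul_sum]
  refine sum_congr rfl fun l hl => ?_
  rw [← mul_assoc, ← pow_sub₀ ψ hψ (by simpa using mem_range.1 hl), Nat.add_sub_add_right]

namespace Lagrange

variable {F ι : Type*} [Field F] [Fintype ι] [DecidableEq ι] {ξ : ι → F}

noncomputable def diffMatrix (ξ : ι → F) : Matrix ι ι F :=
  Matrix.of fun k l => (derivative (Lagrange.basis univ ξ l)).eval (ξ k)

theorem diffMatrix_mulVec_eval (hξ : ξ.Injective) {q : F[X]} (hq : q.degree < Fintype.card ι) :
    diffMatrix ξ *ᵥ (fun i => q.eval (ξ i)) = fun k => (derivative q).eval (ξ k) := by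
  funext k
  conv_rhs => rw [eq_interpolate (s := univ) (f := q) hξ.injOn (by rwa [card_univ])]
  simp [mulVec, dotProduct, interpolate_apply, eval_finsetSum, diffMatrix, mul_comm]

theorem diffMatrix_pow_mulVec_eval (hξ : ξ.Injective) (m : ℕ) {q : F[X]}
    (hq : q.degree < Fintype.card ι) :
    diffMatrix ξ ^ m *ᵥ (fun i => q.eval (ξ i)) = fun k => (derivative^[m] q).eval (ξ k) := by
  induction m generalizing q with
  | zero => simp
  | succ m ih =>
    rw [pow_succ, ← mulVec_mulVec, diffMatrix_mulVec_eval hξ hq, Function.iterate_succ_apply]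
    exact ih (degree_derivative_le.trans_lt hq)

theorem diffMatrix_pow_card (hξ : ξ.Injective) : diffMatrix ξ ^ Fintype.card ι = 0 := by
  refine ext_of_mulVec_single fun l => ?_
  have hl : ∀ k, (Lagrange.basis univ ξ l).eval (ξ k) = (Pi.single l 1 : ι → F) k := by
    intro k
    rcases eq_or_ne k l with rfl | hkl
    · simp [eval_basis_self hξ.injOn (mem_univ k)]
    · simp [eval_basis_of_ne hkl.symm (mem_univ k), hkl]
  have hdeg : (Lagrange.basis univ ξ l).degree < Fintype.card ι := by
    rw [degree_basis hξ.injOn (mem_univ l), card_univ]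
    exact_mod_cast Nat.sub_lt (Fintype.card_pos_iff.2 ⟨l⟩) one_pos
  rw [← funext hl, diffMatrix_pow_mulVec_eval hξ _ hdeg,
    iterate_derivative_eq_zero_of_degree_lt hdeg, zero_mulVec]
  exact funext fun _ => eval_zero

theorem diffMatrix_mulVec_one (hξ : ξ.Injective) : diffMatrix ξ *ᵥ 1 = 0 := by
  cases isEmpty_or_nonempty ι
  · exact Subsingleton.elim _ _
  · have h := diffMatrix_mulVec_eval hξ (q := 1) (by simp [Fintype.card_pos])
    simp only [eval_one, derivative_one, eval_zero] at h
    exact h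

theorem dotProduct_eval_derivative_eq_zero {K : Type*} [CommRing K] [Algebra F K]
    (hξ : ξ.Injective) {r : ι → K} (hr : r ᵥ* (diffMatrix ξ).map (algebraMap F K) = 0)
    {q : F[X]} (hq : q.degree < Fintype.card ι) :
    r ⬝ᵥ (fun k => algebraMap F K ((derivative q).eval (ξ k))) = 0 := by
  calc r ⬝ᵥ (fun k => algebraMap F K ((derivative q).eval (ξ k)))
      = r ⬝ᵥ ((diffMatrix ξ).map (algebraMap F K) *ᵥ
          fun k => algebraMap F K (q.eval (ξ k))) := by
        congr 1
        funext k
        rw [← congrFun (diffMatrix_mulVec_eval hξ hq) k]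
        exact RingHom.map_mulVec _ _ _ k
    _ = 0 := by rw [dotProduct_mulVec, hr, zero_dotProduct]

theorem eq_zero_of_vecMul_diffMatrix_eq_zero {K : Type*} [CommRing K] [Algebra F K] [CharZero F]
    (hξ : ξ.Injective) {r : ι → K} (hr : r ᵥ* (diffMatrix ξ).map (algebraMap F K) = 0)
    {i₀ : ι} (hi₀ : r i₀ = 0) : r = 0 := by
  funext j
  rcases eq_or_ne j i₀ with rfl | hj
  · exact hi₀
  set s := univ.erase i₀
  have hjs : j ∈ s := mem_erase.2 ⟨hj, mem_univ j⟩
  obtain ⟨Q, hQ, hQdeg⟩ := exists_derivative_eq (Lagrange.basis s ξ j)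
  have hQlt : Q.degree < Fintype.card ι := by
    refine degree_le_natDegree.trans_lt ?_
    have : 2 ≤ Fintype.card ι := Fintype.one_lt_card_iff.2 ⟨j, i₀, hj⟩
    rw [natDegree_basis hξ.injOn hjs, card_erase_of_mem (mem_univ _), card_univ] at hQdeg
    exact_mod_cast (by omega : Q.natDegree < Fintype.card ι)
  have h := dotProduct_eval_derivative_eq_zero hξ hr hQlt
  rwa [hQ, dotProduct, sum_eq_single_of_mem j (mem_univ j) fun k _ hkj => ?_,
    eval_basis_self hξ.injOn hjs, map_one, mul_one] at h
  rcases eq_or_ne k i₀ with rfl | hk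
  · rw [hi₀, zero_mul]
  · rw [eval_basis_of_ne hkj.symm (mem_erase.2 ⟨hk, mem_univ k⟩), map_zero, mul_zero]

theorem eq_zero_of_vecMul_diffMatrix_eq_single {K : Type*} [Field K] [Algebra F K] [CharZero F]
    (hξ : ξ.Injective) {c : K} (hc : c ≠ 0) {r : ι → K} {i₀ : ι}
    (h : r ᵥ* (diffMatrix ξ).map (algebraMap F K) = Pi.single i₀ (c * r i₀)) : r = 0 := by
  have hone : (diffMatrix ξ).map (algebraMap F K) *ᵥ 1 = 0 := funext fun i => by
    simpa [diffMatrix_mulVec_one hξ] using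
      (RingHom.map_mulVec (algebraMap F K) (diffMatrix ξ) 1 i).symm
  have hi₀ : r i₀ = 0 :=
    (mul_eq_zero.1 (Matrix.eq_zero_of_vecMul_eq_single hone h)).resolve_left hc
  rw [hi₀, mul_zero, Pi.single_zero] at h
  exact eq_zero_of_vecMul_diffMatrix_eq_zero hξ h hi₀

theorem apply_eq_of_vecMul_diffMatrix_eq_smul_add_single {K : Type*} [Field K] [Algebra F K]
    (hξ : ξ.Injective) {ψ : K} (hψ : ψ ≠ 0) {r : ι → K} {i₀ : ι} {c : K}
    (h : r ᵥ* (diffMatrix ξ).map (algebraMap F K) = ψ • r + Pi.single i₀ c) (k : ι) :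
    r k = -c * ∑ l ∈ range (Fintype.card ι),
      (ψ ^ (l + 1))⁻¹ * algebraMap F K ((diffMatrix ξ ^ l) i₀ k) := by
  have hnil : (diffMatrix ξ).map (algebraMap F K) ^ Fintype.card ι = 0 := by
    rw [← Matrix.map_pow, diffMatrix_pow_card hξ, Matrix.map_zero _ (map_zero _)]
  rw [Matrix.eq_neg_sum_of_vecMul_eq_smul_add hnil hψ h]
  simp [← Matrix.map_pow, mul_sum, mul_left_comm]

end Lagrange

theorem dgsem_calL_eigenpairs_general (p : ℕ)
    (ξ : Fin (p + 1) → ℝ) (hξ : StrictMono ξ)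
    (ω : Fin (p + 1) → ℝ) (hω : ∀ k, 0 < ω k)
    (D : Matrix (Fin (p + 1)) (Fin (p + 1)) ℝ)
    (hD : ∀ k l, D k l = (derivative (Lagrange.basis Finset.univ ξ l)).eval (ξ k))
    (L : Matrix (Fin (p + 1)) (Fin (p + 1)) ℂ)
    (hL : L = (D.transpose
        - Matrix.single (Fin.last p) (Fin.last p) (ω (Fin.last p))⁻¹).map
          (Complex.ofReal)) :
    (∀ r : Fin (p + 1) → ℂ, L.mulVec r = 0 → r = 0) ∧
      ∀ (ψ : ℂ) (r : Fin (p + 1) → ℂ), L.mulVec r = ψ • r → r (Fin.last p) = 1 →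
        ((ω (Fin.last p) : ℂ) * ψ ^ (p + 1)
            + ∑ l ∈ Finset.range (p + 1),
                ψ ^ (p - l) * ((D ^ l) (Fin.last p) (Fin.last p) : ℂ) = 0) ∧
          ∀ k : Fin (p + 1), k ≠ Fin.last p →
            r k = -(ω (Fin.last p) : ℂ)⁻¹
                * ∑ l ∈ Finset.range (p + 1),
                    (ψ ^ (l + 1))⁻¹ * ((D ^ l) (Fin.last p) k : ℂ) := by
  obtain rfl : D = Lagrange.diffMatrix ξ := Matrix.ext hD
  have hω₀ : (ω (Fin.last p) : ℂ) ≠ 0 := by exact_mod_cast (hω _).ne'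
  have hL' : ∀ r, L *ᵥ r = r ᵥ* (Lagrange.diffMatrix ξ).map (algebraMap ℝ ℂ)
      - Pi.single (Fin.last p) ((ω (Fin.last p) : ℂ)⁻¹ * r (Fin.last p)) := fun r => by
    rw [hL, ← Complex.coe_algebraMap, Matrix.map_sub _ (map_sub _), sub_mulVec, transpose_map,
      mulVec_transpose, map_single, single_mulVec, map_inv₀]
    rfl
  have hker : ∀ r : Fin (p + 1) → ℂ, L *ᵥ r = 0 → r = 0 := fun r hr =>
    Lagrange.eq_zero_of_vecMul_diffMatrix_eq_single hξ.injective (inv_ne_zero hω₀)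
      (by rwa [hL', sub_eq_zero] at hr)
  refine ⟨hker, fun ψ r hψr hr1 => ?_⟩
  have hψ : ψ ≠ 0 := by
    rintro rfl
    simp [hker r (by simpa using hψr)] at hr1
  have hr := Lagrange.apply_eq_of_vecMul_diffMatrix_eq_smul_add_single hξ.injective hψ
    (by rw [← sub_eq_iff_eq_add, ← hψr, hL', hr1, mul_one])
  simp only [Fintype.card_fin, Complex.coe_algebraMap] at hr
  refine ⟨?_, fun k _ => hr k⟩
  have hlast := hr (Fin.last p)
  rw [hr1] at hlast
  rw [← pow_succ_mul_sum_inv_pow_succ_mul hψ]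
  linear_combination (norm := (field_simp; ring)) (ψ ^ (p + 1) * ω (Fin.last p)) * hlast

/-- For `𝓛 = Dᵀ - (1/ω_p) e_p e_pᵀ` (viewed over `ℂ`): `0` is not an eigenvalue of `𝓛`,
and every eigenpair `(ψ, r)` with `r_p = 1` satisfies the characteristic polynomial
relation `ω_p ψ^{p+1} + ∑_{l=0}^{p} ψ^{p-l} D^(l)_{pp} = 0` and the explicit eigenvector
formula `r_k = -(1/ω_p) ∑_{l=0}^{p} ψ^{-l-1} D^(l)_{pk}` for `k < p`. -/
theorem dgsem_calL_eigenpairs (p : ℕ) (hp : 1 ≤ p)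
    (ξ : Fin (p + 1) → ℝ) (hξ : StrictMono ξ)
    (h0 : ξ 0 = -1) (hlast : ξ (Fin.last p) = 1)
    (ω : Fin (p + 1) → ℝ) (hω : ∀ k, 0 < ω k)
    (hquad : ∀ f : ℝ[X], f.natDegree ≤ 2 * p - 1 →
      ∑ k, ω k * f.eval (ξ k) = ∫ x in (-1 : ℝ)..1, f.eval x)
    (D : Matrix (Fin (p + 1)) (Fin (p + 1)) ℝ)
    (hD : ∀ k l, D k l = (derivative (Lagrange.basis Finset.univ ξ l)).eval (ξ k))
    (L : Matrix (Fin (p + 1)) (Fin (p + 1)) ℂ)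
    (hL : L = (D.transpose
        - Matrix.single (Fin.last p) (Fin.last p) (ω (Fin.last p))⁻¹).map
          (Complex.ofReal)) :
    (∀ r : Fin (p + 1) → ℂ, L.mulVec r = 0 → r = 0) ∧
      ∀ (ψ : ℂ) (r : Fin (p + 1) → ℂ), L.mulVec r = ψ • r → r (Fin.last p) = 1 →
        ((ω (Fin.last p) : ℂ) * ψ ^ (p + 1)
            + ∑ l ∈ Finset.range (p + 1),
                ψ ^ (p - l) * ((D ^ l) (Fin.last p) (Fin.last p) : ℂ) = 0) ∧
          ∀ k : Fin (p + 1), k ≠ Fin.last p →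
            r k = -(ω (Fin.last p) : ℂ)⁻¹
                * ∑ l ∈ Finset.range (p + 1),
                    (ψ ^ (l + 1))⁻¹ * ((D ^ l) (Fin.last p) k : ℂ) :=
  dgsem_calL_eigenpairs_general p ξ hξ ω hω D hD L hL
end

section
/- Suppose for each cell (i,j) the FCT-limited update satisfies ⟨u^{n+1}⟩_{ij} = ⟨u_{LO}^{n+1}⟩_{ij} + Σ_{(r,s)∈S(i,j)} l_{ij}^{rs} A_{ij}^{rs}, where the limiter coefficients are l_{ij}^{rs} = min(l_{ij}^−, l_{rs}^+) if A_{ij}^{rs} < 0 and min(l_{rs}^−, l_{ij}^+) otherwise, with l_{ij}^− = min(1, Q_{ij}^−/P_{ij}^−), l_{ij}^+ = min(1, Q_{ij}^+/P_{ij}^+), P_{ij}^− = Σ_{(r,s)} min(A_{ij}^{rs}, 0), P_{ij}^+ = Σ_{(r,s)} max(A_{ij}^{rs}, 0), Q_{ij}^− = m − ⟨u_{LO}^{n+1}⟩_{ij} ≤ 0, Q_{ij}^+ = M − ⟨u_{LO}^{n+1}⟩_{ij} ≥ 0. Then the limited cell averages satisfy m ≤ ⟨u^{n+1}⟩_{ij}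 ≤ M for all (i,j). -/
/-- Face neighbors of a cell `(i,j)` on a 2D Cartesian grid. -/
def fctNeighbors (c : ℤ × ℤ) : Finset (ℤ × ℤ) :=
  {(c.1 - 1, c.2), (c.1 + 1, c.2), (c.1, c.2 - 1), (c.1, c.2 + 1)}

/-- The FCT-limited cell averages satisfy the maximum principle `m ≤ ⟨u^{n+1}⟩ ≤ M`,
provided the low-order cell averages do. The limiter coefficients follow Zalesak's
construction, with the convention `l^± = 1` when `P^± = 0`. -/
theorem fct_limiter_maximum_principle (m M : ℝ)
    (uLO unew : ℤ × ℤ → ℝ) (A : ℤ × ℤ → ℤ × ℤ → ℝ)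
    (hanti : ∀ c d, A c d = -A d c)
    (hLO : ∀ c, m ≤ uLO c ∧ uLO c ≤ M)
    (Pm Pp Qm Qp lm lp : ℤ × ℤ → ℝ) (l : ℤ × ℤ → ℤ × ℤ → ℝ)
    (hPm : ∀ c, Pm c = ∑ d ∈ fctNeighbors c, min (A c d) 0)
    (hPp : ∀ c, Pp c = ∑ d ∈ fctNeighbors c, max (A c d) 0)
    (hQm : ∀ c, Qm c = m - uLO c)
    (hQp : ∀ c, Qp c = M - uLO c)
    (hlm : ∀ c, lm c = if Pm c = 0 then 1 else min 1 (Qm c / Pm c))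
    (hlp : ∀ c, lp c = if Pp c = 0 then 1 else min 1 (Qp c / Pp c))
    (hl : ∀ c d, l c d = if A c d < 0 then min (lm c) (lp d) else min (lm d) (lp c))
    (hupd : ∀ c, unew c = uLO c + ∑ d ∈ fctNeighbors c, l c d * A c d) :
    ∀ c, m ≤ unew c ∧ unew c ≤ M := by
  have hQm_nonpos : ∀ c, Qm c ≤ 0 := fun c => by
    rw [hQm]; linarith [(hLO c).1]
  have hQp_nonneg : ∀ c, 0 ≤ Qp c := fun c => by
    rw [hQp]; linarith [(hLO c).2]
  have hPm_nonpos : ∀ c, Pm c ≤ 0 := fun c => by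
    rw [hPm]; exact Finset.sum_nonpos fun d _ => min_le_right _ _
  have hPp_nonneg : ∀ c, 0 ≤ Pp c := fun c => by
    rw [hPp]; exact Finset.sum_nonneg fun d _ => le_max_right _ _
  have hlm_mem : ∀ c, 0 ≤ lm c ∧ lm c ≤ 1 := fun c => by
    rw [hlm]
    by_cases h : Pm c = 0
    · simp [h]
    · simp only [h, if_false]
      have hPmlt : Pm c < 0 := lt_of_le_of_ne (hPm_nonpos c) h
      constructor
      · exact le_min zero_le_one (div_nonneg_iff.mpr (Or.inr ⟨hQm_nonpos c, hPmlt.le⟩))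
      · exact min_le_left _ _
  have hlp_mem : ∀ c, 0 ≤ lp c ∧ lp c ≤ 1 := fun c => by
    rw [hlp]
    by_cases h : Pp c = 0
    · simp [h]
    · simp only [h, if_false]
      have hPplt : 0 < Pp c := lt_of_le_of_ne (hPp_nonneg c) (Ne.symm h)
      constructor
      · exact le_min zero_le_one (div_nonneg (hQp_nonneg c) hPplt.le)
      · exact min_le_left _ _
  have hl_nonneg : ∀ c d, 0 ≤ l c d := fun c d => by
    rw [hl]
    split
    · exact le_min (hlm_mem c).1 (hlp_mem d).1
    · exact le_min (hlm_mem d).1 (hlp_mem c).1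
  intro c
  -- Upper bound on the antidiffusive sum
  have hsum_ub : ∑ d ∈ fctNeighbors c, l c d * A c d ≤ Qp c := by
    have h1 : ∑ d ∈ fctNeighbors c, l c d * A c d
        ≤ ∑ d ∈ fctNeighbors c, lp c * max (A c d) 0 := by
      apply Finset.sum_le_sum
      intro d _
      by_cases hA : A c d < 0
      · have : l c d * A c d ≤ 0 :=
          mul_nonpos_of_nonneg_of_nonpos (hl_nonneg c d) hA.le
        have : lp c * max (A c d) 0 = 0 := by
          rw [max_eq_right hA.le, mul_zero]
        linarith [mul_nonpos_of_nonneg_of_nonpos (hl_nonneg c d) hA.le]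
      · push_neg at hA
        rw [max_eq_left hA]
        have hle : l c d ≤ lp c := by rw [hl, if_neg (not_lt.2 hA)]; exact min_le_right _ _
        exact mul_le_mul_of_nonneg_right hle hA
    have h2 : ∑ d ∈ fctNeighbors c, lp c * max (A c d) 0 = lp c * Pp c := by
      rw [hPp, Finset.mul_sum]
    have h3 : lp c * Pp c ≤ Qp c := by
      by_cases h : Pp c = 0
      · rw [h, mul_zero]; exact hQp_nonneg c
      · have hPplt : 0 < Pp c := lt_of_le_of_ne (hPp_nonneg c) (Ne.symm h)
        have : lp c ≤ Qp c / Pp c := by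
          rw [hlp]; simp only [h, if_false]; exact min_le_right _ _
        calc lp c * Pp c ≤ (Qp c / Pp c) * Pp c :=
              mul_le_mul_of_nonneg_right this hPplt.le
          _ = Qp c := div_mul_cancel₀ _ h
    linarith
  -- Lower bound on the antidiffusive sum
  have hsum_lb : Qm c ≤ ∑ d ∈ fctNeighbors c, l c d * A c d := by
    have h1 : ∑ d ∈ fctNeighbors c, lm c * min (A c d) 0
        ≤ ∑ d ∈ fctNeighbors c, l c d * A c d := by
      apply Finset.sum_le_sum
      intro d _
      by_cases hA : A c d < 0
      · rw [min_eq_left hA.le]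
        have hle : l c d ≤ lm c := by rw [hl, if_pos hA]; exact min_le_left _ _
        nlinarith [hl_nonneg c d]
      · push_neg at hA
        rw [min_eq_right hA, mul_zero]
        exact mul_nonneg (hl_nonneg c d) hA
    have h2 : ∑ d ∈ fctNeighbors c, lm c * min (A c d) 0 = lm c * Pm c := by
      rw [hPm, Finset.mul_sum]
    have h3 : Qm c ≤ lm c * Pm c := by
      by_cases h : Pm c = 0
      · rw [h, mul_zero]; exact hQm_nonpos c
      · have hPmlt : Pm c < 0 := lt_of_le_of_ne (hPm_nonpos c) h
        have : lm c ≤ Qm c / Pm c := by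
          rw [hlm]; simp only [h, if_false]; exact min_le_right _ _
        calc Qm c = (Qm c / Pm c) * Pm c := (div_mul_cancel₀ _ h).symm
          _ ≤ lm c * Pm c := mul_le_mul_of_nonpos_right this hPmlt.le
    linarith
  rw [hQm] at hsum_lb
  rw [hQp] at hsum_ub
  rw [hupd]
  constructor <;> linarith
end
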